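/- arXiv:1407.5094 — 3 statements merged into one kernel-verified Lean document; each statement's English description precedes it below -/
import Mathlib

section
/- If G is an abelian group and H is a subgroup of G with corank H = 0, then corank(G/H) = corank G. -/
/-- The corank of an abelian group `G`: the supremum of the natural numbers `n` such that
there exists a surjective group homomorphism from `G` onto `ℤ^n`. -/
noncomputable def corank (G : Type) [AddCommGroup G] : ℕ∞ :=
  sSup {c : ℕ∞ | ∃ n : ℕ, c = (n : ℕ∞) ∧
    ∃ f : G →+ (Fin n → ℤ), Function.Surjective f}

/-- Any nontrivial additive subgroup of `ℤ` surjects onto `ℤ`. -/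
lemma int_subgroup_surj (S : AddSubgroup ℤ) (hS : S ≠ ⊥) :
    ∃ e : S →+ ℤ, Function.Surjective e := by
  obtain ⟨g, rfl⟩ := Int.subgroup_cyclic S
  have hg : g ≠ 0 := by
    rintro rfl
    simp at hS
  have hinj : Function.Injective (zmultiplesHom ℤ g) := by
    intro a b hab
    simp [zmultiplesHom] at hab
    exact hab.resolve_right hg
  have hr : (zmultiplesHom ℤ g).range = AddSubgroup.closure {g} := by
    ext x
    simp only [AddMonoidHom.mem_range, AddSubgroup.mem_closure_singleton,
      zmultiplesHom_apply]
  let e1 : ℤ ≃+ (zmultiplesHom ℤ g).range := AddMonoidHom.ofInjective hinj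
  let e2 : (zmultiplesHom ℤ g).range ≃+ AddSubgroup.closure {g} :=
    AddEquiv.addSubgroupCongr hr
  exact ⟨(e2.symm.trans e1.symm).toAddMonoidHom, (e2.symm.trans e1.symm).surjective⟩

/-- If `H` has corank `0` and `f : G →+ ℤ^n`, then `H ⊆ ker f`. -/
lemma ker_of_corank_zero {G : Type} [AddCommGroup G] (H : AddSubgroup G)
    (h : sSup {c : ℕ∞ | ∃ n : ℕ, c = (n : ℕ∞) ∧
      ∃ f : H →+ (Fin n → ℤ), Function.Surjective f} = 0)
    {n : ℕ} (f : G →+ (Fin n → ℤ)) : ∀ x ∈ H, f x = 0 := by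
  by_contra hc
  push_neg at hc
  obtain ⟨x, hxH, hx⟩ := hc
  obtain ⟨i, hi⟩ : ∃ i, f x i ≠ 0 := by
    by_contra hall
    push_neg at hall
    exact hx (funext hall)
  set ψ : H →+ ℤ := (Pi.evalAddMonoidHom (fun _ => ℤ) i).comp (f.comp H.subtype) with hψ
  have hψx : ψ ⟨x, hxH⟩ ≠ 0 := hi
  have hrange : ψ.range ≠ ⊥ := by
    intro hb
    apply hψx
    have : ψ ⟨x, hxH⟩ ∈ ψ.range := ⟨_, rfl⟩
    rw [hb] at this
    simpa using this
  obtain ⟨e, he⟩ := int_subgroup_surj ψ.range hrange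
  have hsurj : Function.Surjective (e.comp ψ.rangeRestrict) :=
    he.comp ψ.rangeRestrict_surjective
  have h1 : (1 : ℕ∞) ∈ {c : ℕ∞ | ∃ n : ℕ, c = (n : ℕ∞) ∧
      ∃ f : H →+ (Fin n → ℤ), Function.Surjective f} := by
    refine ⟨1, by norm_num, (AddEquiv.piUnique (fun _ : Fin 1 => ℤ)).symm.toAddMonoidHom.comp
      (e.comp ψ.rangeRestrict), ?_⟩
    exact (AddEquiv.piUnique (fun _ : Fin 1 => ℤ)).symm.surjective.comp hsurj
  have := le_sSup h1
  rw [h] at this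
  simp at this

/-- If `G` is an abelian group and `H` is a subgroup of `G` with `corank H = 0`,
then `corank (G/H) = corank G`. -/
theorem corank_quotient_eq_of_corank_subgroup_zero (G : Type) [AddCommGroup G]
    (H : AddSubgroup G) (h : corank H = 0) :
    corank (G ⧸ H) = corank G := by
  unfold corank at h ⊢
  congr 1
  ext c
  constructor
  · rintro ⟨n, rfl, g, hg⟩
    exact ⟨n, rfl, g.comp (QuotientAddGroup.mk' H), hg.comp (QuotientAddGroup.mk'_surjective H)⟩
  · rintro ⟨n, rfl, f, hf⟩
    have hker := ker_of_corank_zero H h f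
    refine ⟨n, rfl, QuotientAddGroup.lift H f hker, ?_⟩
    intro y
    obtain ⟨x, hx⟩ := hf y
    exact ⟨QuotientAddGroup.mk x, hx⟩
end

section
/- If G is an abelian group with finite corank n, then G is isomorphic to ℤ^n ⊕ H for some abelian group H with corank H = 0. -/
/-!
A surjection `f : G → ℤⁿ` onto a free module splits, so `G ≅ ℤⁿ × ker f`. Since the corank of `G`
is finite the supremum defining it is attained, giving such an `f` with `n = corank G`. A surjection
`ker f → ℤᵏ` would combine with the projection onto `ℤⁿ` into a surjection `G → ℤⁿ⁺ᵏ`, so `k = 0`.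
-/

open Function

theorem LinearMap.nonempty_linearEquiv_prod_ker {R M P : Type*} [Ring R] [AddCommGroup M]
    [Module R M] [AddCommGroup P] [Module R P] [Module.Projective R P] (f : M →ₗ[R] P)
    (hf : Surjective f) : Nonempty (M ≃ₗ[R] P × ker f) := by
  obtain ⟨s, hs⟩ := Module.projective_lifting_property f LinearMap.id hf
  exact ⟨((exact_subtype_ker_map f).splitSurjectiveEquiv (ker f).injective_subtype ⟨s, hs⟩).1.trans
    (LinearEquiv.prodComm R _ _)⟩

section Corank

variable {G G' : Type} [AddCommGroup G] [AddCommGroup G']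

theorem natCard_le_corank {ι : Type} [Finite ι] (f : G →+ (ι → ℤ)) (hf : Surjective f) :
    (Nat.card ι : ℕ∞) ≤ corank G := by
  let e : (ι → ℤ) ≃+ (Fin (Nat.card ι) → ℤ) :=
    (LinearEquiv.funCongrLeft ℤ ℤ (Finite.equivFin ι).symm).toAddEquiv
  exact le_sSup ⟨_, rfl, e.toAddMonoidHom.comp f, e.surjective.comp hf⟩

theorem corank_eq_zero_iff :
    corank G = 0 ↔ ∀ (n : ℕ) (f : G →+ (Fin n → ℤ)), Surjective f → n = 0 := by
  refine sSup_eq_bot.trans ⟨fun h n f hf => ?_, ?_⟩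
  · exact Nat.cast_eq_zero.1 (h _ ⟨n, rfl, f, hf⟩)
  · rintro h _ ⟨n, rfl, f, hf⟩
    simp [h n f hf]

theorem exists_surjective_of_corank_eq {n : ℕ} (h : corank G = n) :
    ∃ f : G →+ (Fin n → ℤ), Surjective f := by
  have : Nonempty {c : ℕ∞ | ∃ m : ℕ, c = m ∧ ∃ f : G →+ (Fin m → ℤ), Surjective f} :=
    ⟨0, 0, rfl, 0, fun _ => ⟨0, Subsingleton.elim _ _⟩⟩
  obtain ⟨m, hm, f, hf⟩ := ENat.sSup_mem_of_nonempty_of_lt_top (h.trans_lt (ENat.natCast_lt_top n))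
  obtain rfl : m = n := by exact_mod_cast hm.symm.trans h
  exact ⟨f, hf⟩

theorem add_le_corank_prod {A B : Type} [AddCommGroup A] [AddCommGroup B] {m k : ℕ}
    {f : A →+ (Fin m → ℤ)} {g : B →+ (Fin k → ℤ)} (hf : Surjective f) (hg : Surjective g) :
    ((m + k : ℕ) : ℕ∞) ≤ corank (A × B) := by
  let e := (RingEquiv.sumArrowEquivProdArrow (Fin m) (Fin k) ℤ).symm.toAddEquiv
  simpa using natCard_le_corank (e.toAddMonoidHom.comp (f.prodMap g))
    (e.surjective.comp (hf.prodMap hg))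

theorem corank_congr (e : G ≃+ G') : corank G = corank G' := by
  unfold corank
  congr! 3 with c
  refine exists_congr fun n => and_congr_right fun _ => ⟨fun ⟨f, hf⟩ => ?_, fun ⟨f, hf⟩ => ?_⟩
  · exact ⟨f.comp e.symm.toAddMonoidHom, hf.comp e.symm.surjective⟩
  · exact ⟨f.comp e.toAddMonoidHom, hf.comp e.surjective⟩

end Corank

/-- If `G` is an abelian group with finite corank `n`, then `G ≅ ℤ^n ⊕ H` for some
abelian group `H` with `corank H = 0`. -/
theorem exists_decomposition_of_corank_finite (G : Type) [AddCommGroup G] (n : ℕ)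
    (h : corank G = (n : ℕ∞)) :
    ∃ (H : Type) (_i : AddCommGroup H),
      Nonempty (G ≃+ ((Fin n → ℤ) × H)) ∧ corank H = 0 := by
  obtain ⟨f, hf⟩ := exists_surjective_of_corank_eq h
  obtain ⟨e⟩ := LinearMap.nonempty_linearEquiv_prod_ker f.toIntLinearMap hf
  refine ⟨_, inferInstance, ⟨e.toAddEquiv⟩, corank_eq_zero_iff.2 fun k g hg => ?_⟩
  have hle := add_le_corank_prod (f := AddMonoidHom.id (Fin n → ℤ)) surjective_id hg
  rw [← corank_congr e.toAddEquiv, h] at hle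
  have : n + k ≤ n := by exact_mod_cast hle
  omega
end

section
/- If F is a size function on abelian groups and k = F(ℤ), then F(G) = k · rank(G) for every finitely generated abelian group G. -/
/-!
Both sides are invariant under isomorphism, so by the structure theorem it suffices to treat
`ℤ^n × T` with `T` finite. Additivity and the vanishing of `F` on torsion groups give
`F (ℤ^n × T) = n * F ℤ`. On the rank side, an injection `ℤ^m → ℤ^n × T` stays injective after
projecting away the torsion factor `T`, so `rank (ℤ^n × T) = rank ℤ^n = n` by the invariance
of the rank of free modules.
-/

open scoped DirectSum

/-- The (torsion-free) rank of an abelian group `G`: the supremum of the natural numbers `n`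
such that there exists an injective group homomorphism from `ℤ^n` into `G`. -/
noncomputable def rank (G : Type) [AddCommGroup G] : ℕ∞ :=
  sSup {c : ℕ∞ | ∃ n : ℕ, c = (n : ℕ∞) ∧
    ∃ f : (Fin n → ℤ) →+ G, Function.Injective f}

lemma AddMonoidHom.injective_fst_comp_of_isAddTorsion {M G T : Type*} [AddCommGroup M]
    [IsAddTorsionFree M] [AddCommGroup G] [AddCommGroup T] (hT : IsAddTorsion T)
    (f : M →+ G × T) (hf : Function.Injective f) :
    Function.Injective ((AddMonoidHom.fst G T).comp f) := by
  rw [injective_iff_map_eq_zero]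
  intro z hz
  obtain ⟨k, hk, hkt⟩ := isOfFinAddOrder_iff_nsmul_eq_zero.1 (hT (f z).2)
  have hkz : f (k • z) = 0 := by
    rw [map_nsmul]
    ext
    · rw [Prod.smul_fst, Prod.fst_zero, show (f z).1 = 0 from hz, smul_zero]
    · exact hkt
  exact (nsmul_eq_zero_iff_right hk.ne').1 (hf (hkz.trans f.map_zero.symm))

lemma rank_le_of_injective {G H : Type} [AddCommGroup G] [AddCommGroup H] (g : G →+ H)
    (hg : Function.Injective g) : rank G ≤ rank H := by
  refine sSup_le_sSup ?_
  rintro c ⟨n, rfl, f, hf⟩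
  exact ⟨n, rfl, g.comp f, hg.comp hf⟩

lemma rank_congr {G H : Type} [AddCommGroup G] [AddCommGroup H] (e : G ≃+ H) :
    rank G = rank H :=
  le_antisymm (rank_le_of_injective e.toAddMonoidHom e.injective)
    (rank_le_of_injective e.symm.toAddMonoidHom e.symm.injective)

lemma rank_pi_int (n : ℕ) : rank (Fin n → ℤ) = n := by
  refine le_antisymm (sSup_le ?_) (le_sSup ⟨n, rfl, AddMonoidHom.id _, Function.injective_id⟩)
  rintro c ⟨m, rfl, f, hf⟩
  have := LinearMap.rank_le_of_injective f.toIntLinearMap hf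
  rw [rank_fin_fun, rank_fin_fun] at this
  exact_mod_cast this

lemma rank_prod_of_isAddTorsion (G T : Type) [AddCommGroup G] [AddCommGroup T]
    (hT : IsAddTorsion T) : rank (G × T) = rank G := by
  refine le_antisymm (sSup_le_sSup ?_)
    (rank_le_of_injective (AddMonoidHom.inl G T) (Prod.mk_left_injective 0))
  rintro c ⟨n, rfl, f, hf⟩
  exact ⟨n, rfl, _, f.injective_fst_comp_of_isAddTorsion hT hf⟩

lemma isAddTorsion_directSum_of_finite {ι : Type} [Fintype ι] (β : ι → Type)
    [∀ i, AddCommGroup (β i)] [∀ i, Finite (β i)] : IsAddTorsion (⨁ i, β i) :=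
  have : Finite (⨁ i, β i) := .of_equiv _ (DirectSum.addEquivProd β).symm.toEquiv
  isAddTorsion_of_finite

lemma size_pi_int (F : (G : Type) → [AddCommGroup G] → ℕ∞)
    (hiso : ∀ (G H : Type) [AddCommGroup G] [AddCommGroup H], (G ≃+ H) → F G = F H)
    (htor : ∀ (G : Type) [AddCommGroup G],
      (∀ g : G, ∃ n : ℕ, 0 < n ∧ n • g = 0) → F G = 0)
    (hsum : ∀ (G₁ G₂ : Type) [AddCommGroup G₁] [AddCommGroup G₂],
      F (G₁ × G₂) = F G₁ + F G₂)
    (n : ℕ) : F (Fin n → ℤ) = n * F ℤ := by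
  induction n with
  | zero =>
    rw [htor _ fun g => ⟨1, one_pos, Subsingleton.elim _ _⟩, Nat.cast_zero, zero_mul]
  | succ n ih =>
    rw [← hiso _ _ (Fin.consLinearEquiv ℤ fun _ => ℤ).toAddEquiv, hsum, ih]
    push_cast
    ring

theorem size_function_eq_mul_rank_of_fg_general
    (F : (G : Type) → [AddCommGroup G] → ℕ∞)
    (hiso : ∀ (G H : Type) [AddCommGroup G] [AddCommGroup H], (G ≃+ H) → F G = F H)
    (htor : ∀ (G : Type) [AddCommGroup G],
      (∀ g : G, ∃ n : ℕ, 0 < n ∧ n • g = 0) → F G = 0)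
    (hsum : ∀ (G₁ G₂ : Type) [AddCommGroup G₁] [AddCommGroup G₂],
      F (G₁ × G₂) = F G₁ + F G₂)
    (G : Type) [AddCommGroup G] (hfg : AddGroup.FG G) :
    F G = F ℤ * rank G := by
  obtain ⟨n, ι, _, p, hp, e, ⟨f⟩⟩ := AddCommGroup.equiv_free_prod_directSum_zmod G
  have (i : ι) : NeZero (p i ^ e i) := ⟨pow_ne_zero _ (hp i).ne_zero⟩
  set T := ⨁ i, ZMod (p i ^ e i)
  have hT : IsAddTorsion T := isAddTorsion_directSum_of_finite _
  let f' : G ≃+ (Fin n → ℤ) × T := f.trans (Finsupp.addEquivFunOnFinite.prodCongr (.refl T))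
  calc F G = F ((Fin n → ℤ) × T) := hiso _ _ f'
    _ = n * F ℤ := by
      rw [hsum, size_pi_int F hiso htor hsum,
        htor T fun t => isOfFinAddOrder_iff_nsmul_eq_zero.1 (hT t), add_zero]
    _ = F ℤ * rank G := by
      rw [rank_congr f', rank_prod_of_isAddTorsion _ _ hT, rank_pi_int, mul_comm]

/-- If `F` is a size function on abelian groups and `k = F(ℤ)`, then
`F(G) = k · rank G` for every finitely generated abelian group `G`. -/
theorem size_function_eq_mul_rank_of_fg
    (F : (G : Type) → [AddCommGroup G] → ℕ∞)
    (hiso : ∀ (G H : Type) [AddCommGroup G] [AddCommGroup H], (G ≃+ H) → F G = F H)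
    (htor : ∀ (G : Type) [AddCommGroup G],
      (∀ g : G, ∃ n : ℕ, 0 < n ∧ n • g = 0) → F G = 0)
    (hquot : ∀ (G : Type) [AddCommGroup G] (H : AddSubgroup G),
      F H = 0 → F (G ⧸ H) = F G)
    (hsum : ∀ (G₁ G₂ : Type) [AddCommGroup G₁] [AddCommGroup G₂],
      F (G₁ × G₂) = F G₁ + F G₂)
    (G : Type) [AddCommGroup G] (hfg : AddGroup.FG G) :
    F G = F ℤ * rank G :=
  size_function_eq_mul_rank_of_fg_general F hiso htor hsum G hfg
end
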